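/- arXiv:2106.09405 — 3 statements merged into one kernel-verified Lean document; each statement's English description precedes it below -/
import Mathlib

section
/- Let ε ∈ (0,1/4], ε₀ := (1−√(1−4ε))/2, p ∈ Δ(K), x a mixed action, and x' := c_{ε₀}(x,p). Then NR[x',ε,p] = NR[x,ε₀,p], i.e. an action is (x',ε)-non-revealing at p exactly when it is (x,ε₀)-non-revealing at p. -/
/-!
The silent map `c_ε₀(x,p)` preserves the marginal `x̄^p` and contracts every deviation
`x'(i|k) - x̄^p(i)` by the factor `1 - ε₀`: for a revealing action the deviation is
`(1 - ε₀)(x(i|k) - x̄^p(i))`, while on the non-revealing pool it is `1 - ε₀` times the pooled relative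
deviation, which by averaging stays within `ε₀`. So the band of width `ε₀` for `x` is exactly
the band of width `(1 - ε₀)ε₀` for `x'`, and `ε₀ = (1 - √(1 - 4ε))/2` is the root of `ε₀ - ε₀² = ε`.
-/

open Finset

noncomputable section
open Classical

/-- `p` is an element of the probability simplex Δ(K). -/
def pSimplex {K : Type*} [Fintype K] (p : K → ℝ) : Prop :=
  (∀ k, 0 ≤ p k) ∧ ∑ k, p k = 1

/-- `x : K → Δ(I)` is a mixed action, written `x k i = x(i|k)`. -/
def MixedAction {K I : Type*} [Fintype K] [Fintype I] (x : K → I → ℝ) : Prop :=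
  (∀ k i, 0 ≤ x k i) ∧ ∀ k, ∑ i, x k i = 1

/-- Marginal `x̄^p(i) = ∑_k p(k)·x(i|k)`. -/
def bar {K I : Type*} [Fintype K] (p : K → ℝ) (x : K → I → ℝ) (i : I) : ℝ :=
  ∑ k, p k * x k i

/-- Posterior `p^x(k|i)`. -/
def post {K I : Type*} [Fintype K] (p : K → ℝ) (x : K → I → ℝ) (i : I) (k : K) : ℝ :=
  if bar p x i ≠ 0 then x k i * p k / bar p x i else p k

/-- The set `NR[x,ε,p]` of (x,ε)-non-revealing actions at p. -/
def NRset {K I : Type*} [Fintype K] [Fintype I] (x : K → I → ℝ) (ε : ℝ) (p : K → ℝ) :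
    Finset I :=
  Finset.univ.filter fun i =>
    bar p x i ≠ 0 ∧ ∀ k, (1 - ε) * bar p x i ≤ x k i ∧ x k i ≤ (1 + ε) * bar p x i

/-- The set `R[x,ε,p]` of (x,ε)-revealing actions at p. -/
def Rset {K I : Type*} [Fintype K] [Fintype I] (x : K → I → ℝ) (ε : ℝ) (p : K → ℝ) :
    Finset I :=
  (Finset.univ.filter fun i => bar p x i ≠ 0) \ NRset x ε p

/-- `x(A|k) = ∑_{i∈A} x(i|k)`. -/
def xOn {K I : Type*} (x : K → I → ℝ) (A : Finset I) (k : K) : ℝ := ∑ i ∈ A, x k i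

/-- `x̄^p(A) = ∑_{i∈A} x̄^p(i)`. -/
def barOn {K I : Type*} [Fintype K] (p : K → ℝ) (x : K → I → ℝ) (A : Finset I) : ℝ :=
  ∑ i ∈ A, bar p x i

/-- The ε-silent mapping `c_ε(x,p)`. -/
def silent {K I : Type*} [Fintype K] [Fintype I] (ε : ℝ) (x : K → I → ℝ) (p : K → ℝ) :
    K → I → ℝ :=
  fun k i =>
    if i ∈ NRset x ε p then
      ((1 - ε) * xOn x (NRset x ε p) k / barOn p x (NRset x ε p) + ε) * bar p x i
    else (1 - ε) * x k i + ε * bar p x i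

section SilentMapping
variable {K I : Type*} [Fintype K]

lemma sum_mul_xOn (p : K → ℝ) (x : K → I → ℝ) (A : Finset I) :
    ∑ k, p k * xOn x A k = barOn p x A := by
  simp only [xOn, barOn, bar, mul_sum]
  exact sum_comm

lemma sum_mul_sub_bar {p : K → ℝ} (hp : pSimplex p) (x y : K → I → ℝ) (i : I) :
    ∑ k, p k * (y k i - bar p x i) = bar p y i - bar p x i := by
  simp only [mul_sub, sum_sub_distrib, ← sum_mul, hp.2, one_mul, bar]

variable [Fintype I]

lemma mem_NRset_iff_abs {x : K → I → ℝ} {ε : ℝ} {p : K → ℝ} {i : I} :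
    i ∈ NRset x ε p ↔ bar p x i ≠ 0 ∧ ∀ k, |x k i - bar p x i| ≤ ε * bar p x i := by
  simp only [NRset, mem_filter, mem_univ, true_and, abs_sub_le_iff]
  refine and_congr_right fun _ => forall_congr' fun k => ?_
  constructor <;> rintro ⟨h₁, h₂⟩ <;> constructor <;> linarith

lemma bar_nonneg {p : K → ℝ} (hp : pSimplex p) {x : K → I → ℝ} (hx : MixedAction x) (i : I) :
    0 ≤ bar p x i :=
  sum_nonneg fun k _ => mul_nonneg (hp.1 k) (hx.1 k i)

lemma barOn_NRset_pos {p : K → ℝ} (hp : pSimplex p) {x : K → I → ℝ} (hx : MixedAction x)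
    {ε : ℝ} {i : I} (hi : i ∈ NRset x ε p) : 0 < barOn p x (NRset x ε p) :=
  calc 0 < bar p x i := (bar_nonneg hp hx i).lt_of_ne (mem_NRset_iff_abs.mp hi).1.symm
    _ ≤ barOn p x (NRset x ε p) := single_le_sum (fun j _ => bar_nonneg hp hx j) hi

lemma abs_xOn_NRset_sub_barOn_le (x : K → I → ℝ) (ε : ℝ) (p : K → ℝ) (k : K) :
    |xOn x (NRset x ε p) k - barOn p x (NRset x ε p)| ≤ ε * barOn p x (NRset x ε p) := by
  rw [xOn, barOn, ← sum_sub_distrib, mul_sum]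
  exact (abs_sum_le_sum_abs _ _).trans
    (sum_le_sum fun j hj => ((mem_NRset_iff_abs.mp hj).2 k))

lemma silent_sub_bar_of_mem {ε : ℝ} {x : K → I → ℝ} {p : K → ℝ} {i : I}
    (hi : i ∈ NRset x ε p) (hA : barOn p x (NRset x ε p) ≠ 0) (k : K) :
    silent ε x p k i - bar p x i = (1 - ε) *
      ((xOn x (NRset x ε p) k - barOn p x (NRset x ε p)) / barOn p x (NRset x ε p)) * bar p x i := by
  simp only [silent, if_pos hi]
  field_simp
  ring

lemma silent_sub_bar_of_not_mem {ε : ℝ} {x : K → I → ℝ} {p : K → ℝ} {i : I}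
    (hi : i ∉ NRset x ε p) (k : K) :
    silent ε x p k i - bar p x i = (1 - ε) * (x k i - bar p x i) := by
  simp only [silent, if_neg hi]
  ring

lemma bar_silent (ε : ℝ) {p : K → ℝ} (hp : pSimplex p) {x : K → I → ℝ} (hx : MixedAction x)
    (i : I) : bar p (silent ε x p) i = bar p x i := by
  rw [← sub_eq_zero, ← sum_mul_sub_bar hp]
  by_cases hi : i ∈ NRset x ε p
  · set A := barOn p x (NRset x ε p)
    have hA : A ≠ 0 := (barOn_NRset_pos hp hx hi).ne'
    have hpooled : ∑ k, p k * (xOn x (NRset x ε p) k - A) = 0 := by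
      simp only [mul_sub, sum_sub_distrib, sum_mul_xOn, ← sum_mul, hp.2, one_mul, A, sub_self]
    calc ∑ k, p k * (silent ε x p k i - bar p x i)
        = (1 - ε) / A * bar p x i * ∑ k, p k * (xOn x (NRset x ε p) k - A) := by
          rw [mul_sum]
          refine sum_congr rfl fun k _ => ?_
          rw [silent_sub_bar_of_mem hi hA]
          ring
      _ = 0 := by rw [hpooled, mul_zero]
  · calc ∑ k, p k * (silent ε x p k i - bar p x i)
        = (1 - ε) * ∑ k, p k * (x k i - bar p x i) := by
          rw [mul_sum]
          refine sum_congr rfl fun k _ => ?_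
          rw [silent_sub_bar_of_not_mem hi]
          ring
      _ = 0 := by rw [sum_mul_sub_bar hp, sub_self, mul_zero]

lemma silent_mem_NRset_of_mem {ε : ℝ} (hε : ε ≤ 1) {p : K → ℝ} (hp : pSimplex p)
    {x : K → I → ℝ} (hx : MixedAction x) {i : I} (hi : i ∈ NRset x ε p) :
    i ∈ NRset (silent ε x p) ((1 - ε) * ε) p := by
  obtain ⟨hb, -⟩ := mem_NRset_iff_abs.mp hi
  have hA := barOn_NRset_pos hp hx hi
  refine mem_NRset_iff_abs.mpr ⟨by rwa [bar_silent ε hp hx], fun k => ?_⟩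
  have h1ε : 0 ≤ 1 - ε := sub_nonneg.mpr hε
  have hb₀ : 0 ≤ bar p x i := bar_nonneg hp hx i
  rw [bar_silent ε hp hx, silent_sub_bar_of_mem hi hA.ne', abs_mul, abs_mul, abs_div,
    abs_of_nonneg h1ε, abs_of_pos hA, abs_of_nonneg hb₀]
  gcongr
  exact (div_le_iff₀ hA).mpr (abs_xOn_NRset_sub_barOn_le x ε p k)

lemma mem_NRset_of_silent_mem {ε : ℝ} (hε : ε < 1) {p : K → ℝ} (hp : pSimplex p)
    {x : K → I → ℝ} (hx : MixedAction x) {i : I} (hi : i ∈ NRset (silent ε x p) ((1 - ε) * ε) p) :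
    i ∈ NRset x ε p := by
  by_contra hi'
  obtain ⟨hb, hdev⟩ := mem_NRset_iff_abs.mp hi
  rw [bar_silent ε hp hx] at hb hdev
  refine hi' (mem_NRset_iff_abs.mpr ⟨hb, fun k => ?_⟩)
  have hk := hdev k
  rw [silent_sub_bar_of_not_mem hi', abs_mul, abs_of_pos (sub_pos.mpr hε), mul_assoc] at hk
  exact le_of_mul_le_mul_left hk (sub_pos.mpr hε)

theorem NRset_silent {ε : ℝ} (hε : ε < 1) {p : K → ℝ} (hp : pSimplex p)
    {x : K → I → ℝ} (hx : MixedAction x) :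
    NRset (silent ε x p) ((1 - ε) * ε) p = NRset x ε p := by
  ext i
  exact ⟨mem_NRset_of_silent_mem hε hp hx, silent_mem_NRset_of_mem hε.le hp hx⟩

end SilentMapping

theorem NR_silent_eq_general {K I : Type*} [Fintype K] [Fintype I]
    (ε : ℝ) (hε1 : ε ≤ 1/4)
    (p : K → ℝ) (hp : pSimplex p)
    (x : K → I → ℝ) (hx : MixedAction x) :
    NRset (silent ((1 - Real.sqrt (1 - 4*ε))/2) x p) ε p
      = NRset x ((1 - Real.sqrt (1 - 4*ε))/2) p := by
  set ε₀ := (1 - Real.sqrt (1 - 4*ε))/2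
  have hε₀ : ε₀ < 1 := by
    have := Real.sqrt_nonneg (1 - 4*ε)
    simp only [ε₀]
    linarith
  have hε : (1 - ε₀) * ε₀ = ε := by
    have hsq := Real.sq_sqrt (show (0:ℝ) ≤ 1 - 4*ε by linarith)
    linear_combination (-1/4 : ℝ) * hsq
  simpa only [hε] using NRset_silent hε₀ hp hx

/-- with ε₀ = (1−√(1−4ε))/2 and x' = c_{ε₀}(x,p), NR[x',ε,p] = NR[x,ε₀,p]. -/
theorem NR_silent_eq {K I : Type*} [Fintype K] [Fintype I] [Nonempty K] [Nonempty I]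
    (ε : ℝ) (hε0 : 0 < ε) (hε1 : ε ≤ 1/4)
    (p : K → ℝ) (hp : pSimplex p)
    (x : K → I → ℝ) (hx : MixedAction x) :
    NRset (silent ((1 - Real.sqrt (1 - 4*ε))/2) x p) ε p
      = NRset x ((1 - Real.sqrt (1 - 4*ε))/2) p :=
  NR_silent_eq_general ε hε1 p hp x hx
end
end

section
/- Let (x,p,p') ∈ X₀ and x' := T(x,p,p'). Then for every i ∈ I and k ∈ K, the posteriors satisfy p'^{x'}(k|i) − p^x(k|i) = p'(k) − p(k). -/
open Finset

noncomputable section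
open Classical

/-- Membership in X₀. -/
def InX0 {K I : Type*} [Fintype K] (x : K → I → ℝ) (p p' : K → ℝ) : Prop :=
  (∀ (i : I) (k : K), 0 ≤ p' k + post p x i k - p k) ∧ ∀ k, 0 < p' k

/-- The translation mapping T(x,p,p'). -/
def translAction {K I : Type*} [Fintype K] (x : K → I → ℝ) (p p' : K → ℝ) : K → I → ℝ :=
  fun k i =>
    if InX0 x p p' then bar p x i / p' k * (p' k + post p x i k - p k) else x k i

section Posterior

variable {K I : Type*} [Fintype K] {p : K → ℝ} {x : K → I → ℝ} {i : I}

theorem post_of_bar_eq_zero (h : bar p x i = 0) (k : K) : post p x i k = p k := by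
  simp [post, h]

theorem post_of_bar_ne_zero (h : bar p x i ≠ 0) (k : K) :
    post p x i k = x k i * p k / bar p x i := by
  simp [post, h]

theorem sum_post_eq_one (hp : ∑ k, p k = 1) : ∑ k, post p x i k = 1 := by
  by_cases h : bar p x i = 0
  · simpa only [post_of_bar_eq_zero h] using hp
  · rw [← div_self h]
    simp only [post_of_bar_ne_zero h, ← Finset.sum_div, bar, mul_comm]

end Posterior

section Translation

variable {K I : Type*} [Fintype K] {x : K → I → ℝ} {p p' : K → ℝ}

theorem translAction_of_inX0 (hX0 : InX0 x p p') (k : K) (i : I) :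
    translAction x p p' k i = bar p x i / p' k * (p' k + post p x i k - p k) := by
  rw [translAction, if_pos hX0]

theorem mul_translAction (hX0 : InX0 x p p') (k : K) (i : I) :
    p' k * translAction x p p' k i = bar p x i * (p' k + post p x i k - p k) := by
  rw [translAction_of_inX0 hX0, ← mul_assoc, mul_div_cancel₀ _ (hX0.2 k).ne']

/-- The weights `p' + p^x(·|i) - p` sum to one, so `T` leaves the marginal unchanged. -/
theorem bar_translAction (hp : ∑ k, p k = 1) (hp' : ∑ k, p' k = 1) (hX0 : InX0 x p p')
    (i : I) : bar p' (translAction x p p') i = bar p x i := by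
  simp only [bar, mul_translAction hX0, ← Finset.mul_sum, Finset.sum_sub_distrib,
    Finset.sum_add_distrib, hp, hp', sum_post_eq_one hp]
  ring

theorem post_translAction (hp : ∑ k, p k = 1) (hp' : ∑ k, p' k = 1) (hX0 : InX0 x p p')
    (i : I) (k : K) : post p' (translAction x p p') i k = p' k + post p x i k - p k := by
  have hbar := bar_translAction hp hp' hX0 i
  by_cases h : bar p x i = 0
  · rw [post_of_bar_eq_zero (hbar.trans h), post_of_bar_eq_zero h]
    ring
  · rw [post_of_bar_ne_zero (hbar ▸ h), hbar, mul_comm, mul_translAction hX0,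
      mul_div_cancel_left₀ _ h]

end Translation

theorem translAction_posterior_shift_general {K I : Type*} [Fintype K] [Fintype I]
    (x : K → I → ℝ)
    (p p' : K → ℝ) (hp : pSimplex p) (hp' : pSimplex p')
    (hX0 : InX0 x p p') :
    ∀ (i : I) (k : K),
      post p' (translAction x p p') i k - post p x i k = p' k - p k := by
  intro i k
  rw [post_translAction hp.2 hp'.2 hX0]
  ring

/-- the translation shifts posteriors by p' − p. -/
theorem translAction_posterior_shift {K I : Type*} [Fintype K] [Fintype I]
    [Nonempty K] [Nonempty I]
    (x : K → I → ℝ) (hx : MixedAction x)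
    (p p' : K → ℝ) (hp : pSimplex p) (hp' : pSimplex p')
    (hX0 : InX0 x p p') :
    ∀ (i : I) (k : K),
      post p' (translAction x p p') i k - post p x i k = p' k - p k :=
  translAction_posterior_shift_general x p p' hp hp' hX0
end
end

section
/- Let x be a mixed action, p, p' ∈ Δ(K), x' := T(x,p,p'), q ∈ Δ(L), y : L → Δ(J), G ≥ 0, and g : K × L × I × J → ℝ with |g(k,ℓ,i,j)| ≤ G for all k,ℓ,i,j. Then |∑_{k,ℓ,i,j} p'(k)·q(ℓ)·x'(i|k)·y(j|ℓ)·g(k,ℓ,i,j) − ∑_{k,ℓ,i,j} p(k)·q(ℓ)·x(i|k)·y(j|ℓ)·g(k,ℓ,i,j)| ≤ G·‖p' − p‖₁. -/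
open Finset

noncomputable section
open Classical

/-
In X₀ the translation satisfies p'(k)·x'(i|k) − p(k)·x(i|k) = (p'(k) − p(k))·x̄^p(i), because
x̄^p(i)·p^x(k|i) = p(k)·x(i|k); outside X₀ the same difference is (p'(k) − p(k))·x(i|k).
Either way the payoff difference is ∑_k (p'(k) − p(k))·γ(k) with γ(k) an expected payoff
under a product of probability vectors, so |γ(k)| ≤ G.
-/

theorem MixedAction.pSimplex_row {K I : Type*} [Fintype K] [Fintype I] {x : K → I → ℝ}
    (hx : MixedAction x) (k : K) : pSimplex (x k) :=
  ⟨hx.1 k, hx.2 k⟩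

theorem abs_sum_mul_le_of_pSimplex {ι : Type*} [Fintype ι] {w : ι → ℝ} (hw : pSimplex w)
    {f : ι → ℝ} {G : ℝ} (hf : ∀ i, |f i| ≤ G) : |∑ i, w i * f i| ≤ G :=
  calc |∑ i, w i * f i|
      ≤ ∑ i, |w i * f i| := abs_sum_le_sum_abs _ _
    _ = ∑ i, w i * |f i| := by simp only [abs_mul, abs_of_nonneg (hw.1 _)]
    _ ≤ ∑ i, w i * G := sum_le_sum fun i _ => mul_le_mul_of_nonneg_left (hf i) (hw.1 i)
    _ = G := by rw [← sum_mul, hw.2, one_mul]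

theorem abs_expectedPayoff_le {L I J : Type*} [Fintype L] [Fintype I] [Fintype J]
    {q : L → ℝ} (hq : pSimplex q) {w : I → ℝ} (hw : pSimplex w)
    {y : L → J → ℝ} (hy : MixedAction y) {h : L → I → J → ℝ} {G : ℝ}
    (hh : ∀ l i j, |h l i j| ≤ G) :
    |∑ l, ∑ i, ∑ j, q l * w i * y l j * h l i j| ≤ G := by
  have hfactor : ∑ l, ∑ i, ∑ j, q l * w i * y l j * h l i j
      = ∑ l, q l * ∑ i, w i * ∑ j, y l j * h l i j := by
    simp only [mul_sum, mul_assoc]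
  rw [hfactor]
  exact abs_sum_mul_le_of_pSimplex hq fun l => abs_sum_mul_le_of_pSimplex hw fun i =>
    abs_sum_mul_le_of_pSimplex (hy.pSimplex_row l) fun j => hh l i j

theorem abs_sum_weighted_payoff_le {K L I J : Type*}
    [Fintype K] [Fintype L] [Fintype I] [Fintype J]
    {q : L → ℝ} (hq : pSimplex q) {w : K → I → ℝ} (hw : MixedAction w)
    {y : L → J → ℝ} (hy : MixedAction y) {g : K → L → I → J → ℝ} {G : ℝ}
    (hg : ∀ k l i j, |g k l i j| ≤ G) (d : K → ℝ) :
    |∑ k, ∑ l, ∑ i, ∑ j, d k * q l * w k i * y l j * g k l i j| ≤ G * ∑ k, |d k| := by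
  have hfactor : ∑ k, ∑ l, ∑ i, ∑ j, d k * q l * w k i * y l j * g k l i j
      = ∑ k, d k * ∑ l, ∑ i, ∑ j, q l * w k i * y l j * g k l i j := by
    simp only [mul_sum, mul_assoc]
  rw [hfactor]
  calc |∑ k, d k * ∑ l, ∑ i, ∑ j, q l * w k i * y l j * g k l i j|
      ≤ ∑ k, |d k| * |∑ l, ∑ i, ∑ j, q l * w k i * y l j * g k l i j| :=
        (abs_sum_le_sum_abs _ _).trans_eq (by simp only [abs_mul])
    _ ≤ ∑ k, |d k| * G := by
        gcongr with k
        exact abs_expectedPayoff_le hq (hw.pSimplex_row k) hy (hg k)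
    _ = G * ∑ k, |d k| := by rw [← sum_mul, mul_comm]

section Translation

variable {K I : Type*} [Fintype K] [Fintype I] {x : K → I → ℝ} {p : K → ℝ}

theorem mixedAction_const_bar (hx : MixedAction x) (hp : pSimplex p) :
    MixedAction fun (_ : K) => bar p x := by
  refine ⟨fun _ i => sum_nonneg fun k _ => mul_nonneg (hp.1 k) (hx.1 k i), fun _ => ?_⟩
  simp only [bar]
  rw [sum_comm]
  simp only [← mul_sum, hx.2, mul_one, hp.2]

theorem bar_mul_post (hx : MixedAction x) (hp : pSimplex p) (i : I) (k : K) :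
    bar p x i * post p x i k = p k * x k i := by
  unfold post
  split_ifs with hb
  · field_simp
  · push Not at hb
    have hzero : p k * x k i = 0 :=
      (sum_eq_zero_iff_of_nonneg fun k' _ => mul_nonneg (hp.1 k') (hx.1 k' i)).mp hb k
        (mem_univ k)
    rw [hb, zero_mul, hzero]

theorem exists_mixedAction_mul_translAction_sub (hx : MixedAction x) (hp : pSimplex p)
    (p' : K → ℝ) :
    ∃ w : K → I → ℝ, MixedAction w ∧
      ∀ k i, p' k * translAction x p p' k i - p k * x k i = (p' k - p k) * w k i := by
  by_cases hX0 : InX0 x p p'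
  · refine ⟨fun _ => bar p x, mixedAction_const_bar hx hp, fun k i => ?_⟩
    have hp'k : p' k ≠ 0 := (hX0.2 k).ne'
    simp only [translAction, if_pos hX0]
    field_simp
    linear_combination bar_mul_post hx hp i k
  · refine ⟨x, hx, fun k i => ?_⟩
    simp only [translAction, if_neg hX0]
    ring

end Translation

theorem translAction_payoff_close_general {K L I J : Type*}
    [Fintype K] [Fintype L] [Fintype I] [Fintype J]
    (x : K → I → ℝ) (hx : MixedAction x)
    (p p' : K → ℝ) (hp : pSimplex p)
    (q : L → ℝ) (hq : pSimplex q)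
    (y : L → J → ℝ) (hy : MixedAction y)
    (G : ℝ)
    (g : K → L → I → J → ℝ) (hg : ∀ k l i j, |g k l i j| ≤ G) :
    |(∑ k, ∑ l, ∑ i, ∑ j, p' k * q l * translAction x p p' k i * y l j * g k l i j) -
        ∑ k, ∑ l, ∑ i, ∑ j, p k * q l * x k i * y l j * g k l i j| ≤
      G * ∑ k, |p' k - p k| := by
  obtain ⟨w, hw, hdiff⟩ := exists_mixedAction_mul_translAction_sub hx hp p'
  have hpayoff : (∑ k, ∑ l, ∑ i, ∑ j, p' k * q l * translAction x p p' k i * y l j * g k l i j) -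
        ∑ k, ∑ l, ∑ i, ∑ j, p k * q l * x k i * y l j * g k l i j
      = ∑ k, ∑ l, ∑ i, ∑ j, (p' k - p k) * q l * w k i * y l j * g k l i j := by
    simp only [← sum_sub_distrib]
    refine sum_congr rfl fun k _ => sum_congr rfl fun l _ => sum_congr rfl fun i _ =>
      sum_congr rfl fun j _ => ?_
    linear_combination (q l * y l j * g k l i j) * hdiff k i
  rw [hpayoff]
  exact abs_sum_weighted_payoff_le hq hw hy hg _

/-- payoff closeness under the translation mapping. -/
theorem translAction_payoff_close {K L I J : Type*}
    [Fintype K] [Fintype L] [Fintype I] [Fintype J]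
    [Nonempty K] [Nonempty L] [Nonempty I] [Nonempty J]
    (x : K → I → ℝ) (hx : MixedAction x)
    (p p' : K → ℝ) (hp : pSimplex p) (hp' : pSimplex p')
    (q : L → ℝ) (hq : pSimplex q)
    (y : L → J → ℝ) (hy : MixedAction y)
    (G : ℝ) (hG : 0 ≤ G)
    (g : K → L → I → J → ℝ) (hg : ∀ k l i j, |g k l i j| ≤ G) :
    |(∑ k, ∑ l, ∑ i, ∑ j, p' k * q l * translAction x p p' k i * y l j * g k l i j) -
        ∑ k, ∑ l, ∑ i, ∑ j, p k * q l * x k i * y l j * g k l i j| ≤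
      G * ∑ k, |p' k - p k| :=
  translAction_payoff_close_general x hx p p' hp q hq y hy G g hg
end
end
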